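/- arXiv:2209.03474 — 2 statements merged into one kernel-verified Lean document; each statement's English description precedes it below -/
import Mathlib

section
/- For all v with 0 < v ≤ v* (any v* > 0 at which the small-v series is valid), the ratio lk(v)/f_Ṽ(v), where lk(v) = v^{−5/2}√(2π) ∑_{j≥1} ((2j−1)²π² − v) exp(−(2j−1)²π²/(2v)) and f_Ṽ is the InverseGamma(α, π²/2) density, is bounded above by δ1(v) = (√(2π⁵) Γ(α) / (π²/2)^α) · v^{α−3/2}. -/
/-!
With `s = π² / (2v)` the series equals `v (2s P(s) - Q(s))`, where `Q = oddTheta`,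
`Q(s) = ∑ e^{-s(2j+1)²}`, and `P = oddThetaMoment = -Q'`, so the claim reduces to
`2s P(s) - Q(s) ≤ 2s e^{-s}`. For `s ≥ 1/4` the term `j = 0` dominates. For small `s`, Jacobi's
transformation gives `Q(s) = √(π/s)/4` up to an error `√(π/s) e^{-π²/(4s)}`; bounding `P(s)` by a
difference quotient of `Q` (convexity of `s ↦ e^{-sc}`) with step of order `s^{5/2}`, the leading
terms cancel.
-/

open Real

/-- The `InverseGamma(α, γ)` density. -/
noncomputable def invGammaDensity (α γ v : ℝ) : ℝ :=
  if 0 < v then γ ^ α * v ^ (-α - 1) * Real.exp (-γ / v) / Real.Gamma α else 0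

noncomputable def thetaTail (t : ℝ) : ℝ := ∑' n : ℕ, exp (-t * ((n : ℝ) + 1) ^ 2)

noncomputable def oddTheta (t : ℝ) : ℝ := ∑' j : ℕ, exp (-t * (2 * (j : ℝ) + 1) ^ 2)

noncomputable def oddThetaMoment (t : ℝ) : ℝ :=
  ∑' j : ℕ, (2 * (j : ℝ) + 1) ^ 2 * exp (-t * (2 * (j : ℝ) + 1) ^ 2)

section Summability

variable {t : ℝ}

theorem summable_pow_mul_exp_neg_mul_sq (k : ℕ) (ht : 0 < t) :
    Summable fun n : ℕ ↦ (n : ℝ) ^ k * exp (-t * (n : ℝ) ^ 2) := by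
  refine (summable_pow_mul_exp_neg_nat_mul k ht).of_nonneg_of_le (fun _ ↦ by positivity)
    fun n ↦ mul_le_mul_of_nonneg_left (exp_le_exp.2 ?_) (by positivity)
  have : (n : ℝ) ≤ (n : ℝ) ^ 2 := by exact_mod_cast Nat.le_self_pow two_ne_zero n
  nlinarith

theorem summable_exp_neg_mul_sq (ht : 0 < t) :
    Summable fun n : ℕ ↦ exp (-t * (n : ℝ) ^ 2) := by
  simpa using summable_pow_mul_exp_neg_mul_sq 0 ht

theorem summable_exp_neg_mul_succ_sq (ht : 0 < t) :
    Summable fun n : ℕ ↦ exp (-t * ((n : ℝ) + 1) ^ 2) := by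
  simpa [Function.comp_def] using
    (summable_exp_neg_mul_sq ht).comp_injective (add_left_injective 1)

theorem summable_exp_neg_mul_odd_sq (ht : 0 < t) :
    Summable fun j : ℕ ↦ exp (-t * (2 * (j : ℝ) + 1) ^ 2) := by
  simpa [Function.comp_def] using (summable_exp_neg_mul_sq ht).comp_injective
    (StrictMono.injective fun a b h ↦ by omega : Function.Injective fun j : ℕ ↦ 2 * j + 1)

theorem summable_odd_sq_mul_exp_neg_mul_odd_sq (ht : 0 < t) :
    Summable fun j : ℕ ↦ (2 * (j : ℝ) + 1) ^ 2 * exp (-t * (2 * (j : ℝ) + 1) ^ 2) := by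
  simpa [Function.comp_def] using (summable_pow_mul_exp_neg_mul_sq 2 ht).comp_injective
    (StrictMono.injective fun a b h ↦ by omega : Function.Injective fun j : ℕ ↦ 2 * j + 1)

theorem summable_int_exp_neg_mul_sq (ht : 0 < t) :
    Summable fun n : ℤ ↦ exp (-t * (n : ℝ) ^ 2) :=
  summable_int_iff_summable_nat_and_neg.2 ⟨by simpa using summable_exp_neg_mul_sq ht,
    by simpa using summable_exp_neg_mul_sq ht⟩

end Summability

section Theta

variable {t : ℝ}

theorem tsum_int_exp_neg_mul_sq (ht : 0 < t) :
    ∑' n : ℤ, exp (-t * (n : ℝ) ^ 2) = 1 + 2 * thetaTail t := by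
  rw [tsum_int_eq_zero_add_two_mul_tsum_pnat (fun n ↦ by simp) (summable_int_exp_neg_mul_sq ht),
    tsum_pnat_eq_tsum_succ (f := fun n : ℕ ↦ exp (-t * ((n : ℤ) : ℝ) ^ 2))]
  simp [thetaTail]

/-- Jacobi's transformation `θ(t) = √(π/t) θ(π²/t)` for `θ = 1 + 2 thetaTail`. -/
theorem one_add_two_mul_thetaTail (ht : 0 < t) :
    1 + 2 * thetaTail t = √(π / t) * (1 + 2 * thetaTail (π ^ 2 / t)) := by
  have ha : 0 < t / π := div_pos ht pi_pos
  have h := Real.tsum_exp_neg_mul_int_sq ha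
  have h1 : -π * (t / π) = -t := by field_simp
  have h2 : -π / (t / π) = -(π ^ 2 / t) := by field_simp
  rw [h1, h2, tsum_int_exp_neg_mul_sq ht, tsum_int_exp_neg_mul_sq (by positivity)] at h
  rw [h, sqrt_eq_rpow, one_div, ← inv_rpow ha.le, inv_div]

theorem oddTheta_eq_thetaTail_sub (ht : 0 < t) :
    oddTheta t = thetaTail t - thetaTail (4 * t) := by
  have h := tsum_even_add_odd (f := fun n : ℕ ↦ exp (-t * ((n : ℝ) + 1) ^ 2))
  push_cast at h
  have h4 : ∀ k : ℕ, -t * (2 * (k : ℝ) + 1 + 1) ^ 2 = -(4 * t) * ((k : ℝ) + 1) ^ 2 := fun k ↦ by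
    ring
  simp only [h4] at h
  rw [oddTheta, thetaTail, thetaTail, ← h (summable_exp_neg_mul_odd_sq ht)
    (summable_exp_neg_mul_succ_sq (by positivity))]
  ring

theorem thetaTail_nonneg : 0 ≤ thetaTail t := tsum_nonneg fun _ ↦ (exp_pos _).le

theorem thetaTail_le_of_le {t' : ℝ} (ht : 0 < t) (htt' : t ≤ t') : thetaTail t' ≤ thetaTail t :=
  (summable_exp_neg_mul_succ_sq (ht.trans_le htt')).tsum_le_tsum
    (fun n ↦ exp_le_exp.2 (by nlinarith [sq_nonneg ((n : ℝ) + 1)]))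
    (summable_exp_neg_mul_succ_sq ht)

theorem thetaTail_le_two_mul_exp_neg (ht : 1 ≤ t) : thetaTail t ≤ 2 * exp (-t) := by
  have hr : exp (-t) ≤ 1 / 2 := by
    rw [exp_neg, inv_le_comm₀ (exp_pos t) (by norm_num)]
    linarith [add_one_le_exp t]
  have hr1 : exp (-t) < 1 := by linarith
  have hgeom := (summable_geometric_of_lt_one (exp_pos _).le hr1).mul_left (exp (-t))
  calc thetaTail t ≤ ∑' n : ℕ, exp (-t) * exp (-t) ^ n := by
        refine (summable_exp_neg_mul_succ_sq (by linarith)).tsum_le_tsum (fun n ↦ ?_) hgeom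
        rw [← exp_nat_mul, ← exp_add]
        have : (n : ℝ) ≤ (n : ℝ) ^ 2 := by exact_mod_cast Nat.le_self_pow two_ne_zero n
        exact exp_le_exp.2 (by nlinarith)
    _ = exp (-t) * (1 - exp (-t))⁻¹ := by
        rw [tsum_mul_left, tsum_geometric_of_lt_one (exp_pos _).le hr1]
    _ ≤ exp (-t) * 2 := by
        gcongr
        rw [inv_le_comm₀ (by linarith) (by norm_num)]
        linarith
    _ = 2 * exp (-t) := mul_comm _ _

theorem abs_oddTheta_sub_le (ht : 0 < t) (ht2 : t ≤ 2) :
    |oddTheta t - √(π / t) / 4| ≤ √(π / t) * exp (-(π ^ 2 / (4 * t))) := by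
  set u := π ^ 2 / (4 * t)
  have hu : 1 ≤ u := by
    rw [le_div_iff₀ (by positivity)]
    nlinarith [pi_gt_three]
  have hS : √(π / (4 * t)) = √(π / t) / 2 := by
    rw [show π / (4 * t) = π / t / 2 ^ 2 by ring, sqrt_div' _ (by positivity), sqrt_sq two_pos.le]
  have h1 := one_add_two_mul_thetaTail ht
  have h4 := one_add_two_mul_thetaTail (show 0 < 4 * t by positivity)
  rw [hS] at h4
  rw [show π ^ 2 / t = 4 * u by simp only [u]; field_simp] at h1
  have key : oddTheta t - √(π / t) / 4 = √(π / t) / 2 * (2 * thetaTail (4 * u) - thetaTail u) := by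
    rw [oddTheta_eq_thetaTail_sub ht]
    linear_combination h1 / 2 - h4 / 2
  have hmono := thetaTail_le_of_le (by linarith) (show u ≤ 4 * u by linarith)
  have hexp := thetaTail_le_two_mul_exp_neg hu
  have hnn : 0 ≤ thetaTail (4 * u) := thetaTail_nonneg
  have hS0 : 0 ≤ √(π / t) := sqrt_nonneg _
  rw [key, abs_le]
  constructor <;> nlinarith

end Theta

theorem mul_exp_neg_mul_mul_sub_le (c s s' : ℝ) :
    c * exp (-s * c) * (s - s') ≤ exp (-s' * c) - exp (-s * c) := by
  have h : exp (-s' * c) = exp (-s * c) * exp ((s - s') * c) := by rw [← exp_add]; ring_nf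
  rw [h]
  nlinarith [add_one_le_exp ((s - s') * c), exp_pos (-s * c)]

/-- As `oddThetaMoment = -oddTheta'`, this is the tangent-line inequality for the convex function
`oddTheta`, proved termwise without derivatives. -/
theorem sub_mul_oddThetaMoment_le {s s' : ℝ} (hs : 0 < s) (hs' : 0 < s') :
    (s - s') * oddThetaMoment s ≤ oddTheta s' - oddTheta s := by
  rw [oddThetaMoment, oddTheta, oddTheta, ← tsum_mul_left,
    ← (summable_exp_neg_mul_odd_sq hs').tsum_sub (summable_exp_neg_mul_odd_sq hs)]
  refine Summable.tsum_le_tsum (fun j ↦ ?_)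
    ((summable_odd_sq_mul_exp_neg_mul_odd_sq hs).mul_left _)
    ((summable_exp_neg_mul_odd_sq hs').sub (summable_exp_neg_mul_odd_sq hs))
  linarith [mul_exp_neg_mul_mul_sub_le ((2 * (j : ℝ) + 1) ^ 2) s s']

theorem exp_neg_le_oddTheta {s : ℝ} (hs : 0 < s) : exp (-s) ≤ oddTheta s := by
  rw [oddTheta]
  simpa using (summable_exp_neg_mul_odd_sq hs).le_tsum 0 fun j _ ↦ (exp_pos _).le

theorem mul_exp_neg_le (x : ℝ) : x * exp (-x) ≤ 2 * exp (-1) * exp (-(x / 2)) :=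
  calc x * exp (-x) = 2 * (x / 2 * exp (-(x / 2))) * exp (-(x / 2)) := by
        rw [mul_assoc _ _ (exp _), mul_assoc (x / 2), ← exp_add]; ring_nf
    _ ≤ 2 * exp (-1) * exp (-(x / 2)) := by gcongr; exact mul_exp_neg_le_exp_neg_one _

theorem two_mul_mul_odd_sq_mul_exp_le {s : ℝ} (hs : 1 / 4 ≤ s) (j : ℕ) :
    2 * s * ((2 * (j : ℝ) + 3) ^ 2 * exp (-s * (2 * (j : ℝ) + 3) ^ 2)) ≤
      9 / 2 * exp (-s) * exp (-1) ^ 2 * exp (-1) ^ j := by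
  set m : ℝ := (2 * (j : ℝ) + 3) ^ 2 - 1
  have hj : (0 : ℝ) ≤ j := j.cast_nonneg
  have hm : 8 * ((j : ℝ) + 1) ≤ m := by nlinarith
  have hsplit : exp (-s * (2 * (j : ℝ) + 3) ^ 2) = exp (-s) * exp (-(s * m)) := by
    rw [← exp_add]; congr 1; ring
  have hm9 : s * (m + 1) ≤ 9 / 8 * (s * m) := by nlinarith
  have hdecay : exp (-(s * m / 2)) ≤ exp (-1) ^ (j + 1) := by
    rw [← exp_nat_mul]
    exact exp_le_exp.2 (by push_cast; nlinarith)
  calc 2 * s * ((2 * (j : ℝ) + 3) ^ 2 * exp (-s * (2 * (j : ℝ) + 3) ^ 2))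
      = 2 * exp (-s) * (s * (m + 1) * exp (-(s * m))) := by rw [hsplit]; ring
    _ ≤ 2 * exp (-s) * (9 / 8 * (s * m * exp (-(s * m)))) := by
        rw [← mul_assoc (9 / 8 : ℝ)]
        gcongr
    _ ≤ 2 * exp (-s) * (9 / 8 * (2 * exp (-1) * exp (-1) ^ (j + 1))) := by
        gcongr 2 * exp (-s) * (9 / 8 * ?_)
        exact (mul_exp_neg_le (s * m)).trans (by gcongr)
    _ = 9 / 2 * exp (-s) * exp (-1) ^ 2 * exp (-1) ^ j := by ring

theorem two_mul_mul_oddThetaMoment_le {s : ℝ} (hs : 1 / 4 ≤ s) :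
    2 * s * oddThetaMoment s ≤ (2 * s + 1) * exp (-s) := by
  have hs0 : 0 < s := by linarith
  set x := exp (-1)
  have hx0 : 0 < x := exp_pos _
  have hx : x < 0.37 := exp_neg_one_lt_d9.trans (by norm_num)
  have hsum := summable_odd_sq_mul_exp_neg_mul_odd_sq hs0
  have hsplit : oddThetaMoment s = exp (-s) +
      ∑' j : ℕ, (2 * (j : ℝ) + 3) ^ 2 * exp (-s * (2 * (j : ℝ) + 3) ^ 2) := by
    rw [oddThetaMoment, hsum.tsum_eq_zero_add]
    norm_num [add_assoc, mul_add]
  have htail : Summable fun j : ℕ ↦ 2 * s * ((2 * (j : ℝ) + 3) ^ 2 *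
      exp (-s * (2 * (j : ℝ) + 3) ^ 2)) := by
    refine ((summable_nat_add_iff 1).2 hsum).mul_left (2 * s) |>.congr fun j ↦ ?_
    push_cast; ring_nf
  have htail_le : 2 * s * ∑' j : ℕ, (2 * (j : ℝ) + 3) ^ 2 * exp (-s * (2 * (j : ℝ) + 3) ^ 2) ≤
      9 / 2 * exp (-s) * x ^ 2 * (1 - x)⁻¹ := by
    rw [← tsum_geometric_of_lt_one hx0.le (by linarith), ← tsum_mul_left, ← tsum_mul_left]
    exact htail.tsum_le_tsum (two_mul_mul_odd_sq_mul_exp_le hs)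
      ((summable_geometric_of_lt_one hx0.le (by linarith)).mul_left _)
  have hnum : 9 / 2 * x ^ 2 * (1 - x)⁻¹ ≤ 1 := by
    rw [← div_eq_mul_inv, div_le_one (by linarith)]
    nlinarith
  rw [hsplit, mul_add]
  nlinarith [exp_pos (-s)]

theorem exp_neg_pi_sq_div_le {s : ℝ} (hs : 0 < s) (hs4 : s ≤ 1 / 4) :
    exp (-(π ^ 2 / (4 * s))) ≤ s ^ 3 / 8 := by
  set x := π ^ 2 / (4 * s)
  have hπ : 9 ≤ π ^ 2 := by nlinarith [pi_gt_three]
  have hxs : x * s = π ^ 2 / 4 := by simp only [x]; field_simp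
  have hx : 9 ≤ x := by simp only [x]; rw [le_div_iff₀ (by positivity)]; nlinarith
  have hexp : x ^ 6 / 720 ≤ exp x := by
    simpa [Nat.factorial] using pow_div_factorial_le_exp x (by linarith) 6
  have hxs3 : (9 / 4) ^ 3 ≤ (x * s) ^ 3 := by gcongr; linarith
  have hx3 : (9 : ℝ) ^ 3 ≤ x ^ 3 := by gcongr
  rw [exp_neg, inv_le_iff_one_le_mul₀ (exp_pos _)]
  calc (1 : ℝ) ≤ (x * s) ^ 3 * x ^ 3 / 5760 := by
        nlinarith [mul_le_mul hxs3 hx3 (by norm_num) (by positivity)]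
    _ = s ^ 3 / 8 * (x ^ 6 / 720) := by ring
    _ ≤ s ^ 3 / 8 * exp x := by gcongr

/-- What remains of the small-`s` case after clearing denominators, with `r = √π`,
`δ = s^{3/2}` and `E = e^{-π²/(4s)}`. -/
theorem secant_bound_arith {r δ E : ℝ} (hr : r ≤ 16 / 9) (hδ0 : 0 ≤ δ)
    (hδ : δ ≤ 1 / 8) (hE0 : 0 ≤ E) (hE : E ≤ δ ^ 2 / 8) :
    r * (2 * (1 + δ) ^ 3 * (1 / 4 + E) - (2 * (1 + δ) ^ 2 + δ * (2 + δ)) * (1 / 4 - E)) ≤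
      3 / 2 * δ ^ 2 * (2 + δ) := by
  have hexpand : 2 * (1 + δ) ^ 3 * (1 / 4 + E) - (2 * (1 + δ) ^ 2 + δ * (2 + δ)) * (1 / 4 - E) =
      δ ^ 2 * (3 + 2 * δ) / 4 + E * (2 * (1 + δ) ^ 3 + 2 * (1 + δ) ^ 2 + δ * (2 + δ)) := by ring
  have hcoef : 2 * (1 + δ) ^ 3 + 2 * (1 + δ) ^ 2 + δ * (2 + δ) ≤ 6 := by nlinarith
  have hEc : E * (2 * (1 + δ) ^ 3 + 2 * (1 + δ) ^ 2 + δ * (2 + δ)) ≤ δ ^ 2 / 8 * 6 :=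
    mul_le_mul hE hcoef (by positivity) (by positivity)
  have hbr : δ ^ 2 * (3 + 2 * δ) / 4 + E * (2 * (1 + δ) ^ 3 + 2 * (1 + δ) ^ 2 + δ * (2 + δ)) ≤
      δ ^ 2 * (3 / 2 + δ / 2) := by nlinarith
  rw [hexpand]
  calc _ ≤ 16 / 9 * (δ ^ 2 * (3 / 2 + δ / 2)) := mul_le_mul hr hbr (by positivity) (by norm_num)
    _ ≤ 3 / 2 * δ ^ 2 * (2 + δ) := by nlinarith [sq_nonneg δ]

theorem sqrt_pi_le : √π ≤ 16 / 9 := by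
  rw [sqrt_le_left (by norm_num)]
  linarith [pi_lt_d2]

theorem oddTheta_div_sq_le {s a : ℝ} (hs : 0 < s) (hs2 : s ≤ 2) (ha : 1 ≤ a) :
    oddTheta (s / a ^ 2) ≤ √(π / s) * a * (1 / 4 + exp (-(π ^ 2 / (4 * s)))) := by
  have hs' : 0 < s / a ^ 2 := by positivity
  have hs's : s / a ^ 2 ≤ s := div_le_self hs.le (one_le_pow₀ ha)
  have hS : √(π / (s / a ^ 2)) = √(π / s) * a := by
    rw [div_div_eq_mul_div, mul_div_right_comm, sqrt_mul (by positivity),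
      sqrt_sq (by linarith)]
  have hE : exp (-(π ^ 2 / (4 * (s / a ^ 2)))) ≤ exp (-(π ^ 2 / (4 * s))) :=
    exp_le_exp.2 (neg_le_neg (div_le_div_of_nonneg_left (by positivity) (by positivity)
      (by linarith)))
  have h := (abs_le.1 (abs_oddTheta_sub_le hs' (by linarith))).2
  rw [hS] at h
  nlinarith [mul_le_mul_of_nonneg_left hE (by positivity : 0 ≤ √(π / s) * a)]

theorem two_mul_mul_oddThetaMoment_sub_oddTheta_le_of_le_quarter {s : ℝ} (hs : 0 < s)
    (hs4 : s ≤ 1 / 4) : 2 * s * oddThetaMoment s - oddTheta s ≤ 3 / 2 * s := by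
  set q := √s
  have hq0 : 0 < q := sqrt_pos.2 hs
  have hqs : q ^ 2 = s := sq_sqrt hs.le
  -- step `s - s' ≈ 2 s^{5/2}`: the curvature term and the `E`-errors of the quotient stay `O(1)`
  set δ := q ^ 3
  have hδ0 : 0 < δ := by positivity
  have hδ : δ ≤ 1 / 8 := by
    have hq : q ≤ 1 / 2 := by nlinarith
    calc δ ≤ (1 / 2) ^ 3 := pow_le_pow_left₀ hq0.le hq 3
      _ = 1 / 8 := by norm_num
  set s' := s / (1 + δ) ^ 2
  have hs' : 0 < s' := by positivity
  set S := √(π / s)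
  have hSq : S * q = √π := by rw [← sqrt_mul (by positivity), div_mul_cancel₀ _ hs.ne']
  set E := exp (-(π ^ 2 / (4 * s)))
  have hE : E ≤ δ ^ 2 / 8 := by
    rw [← pow_mul, show q ^ (3 * 2) = s ^ 3 by rw [← hqs]; ring]
    exact exp_neg_pi_sq_div_le hs hs4
  have hQ : S * (1 / 4 - E) ≤ oddTheta s := by
    have := (abs_le.1 (abs_oddTheta_sub_le hs (by linarith))).1
    linarith
  have hQ' : oddTheta s' ≤ S * (1 + δ) * (1 / 4 + E) :=
    oddTheta_div_sq_le hs (by linarith) (by linarith)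
  have hP : s * (δ * (2 + δ)) * oddThetaMoment s ≤ (1 + δ) ^ 2 * (oddTheta s' - oddTheta s) := by
    have hdiff : (s - s') * (1 + δ) ^ 2 = s * (δ * (2 + δ)) := by simp only [s']; field_simp; ring
    rw [← hdiff, mul_right_comm, mul_comm ((1 + δ) ^ 2)]
    exact mul_le_mul_of_nonneg_right (sub_mul_oddThetaMoment_le hs hs') (by positivity)
  set B := 2 * (1 + δ) ^ 3 * (1 / 4 + E) - (2 * (1 + δ) ^ 2 + δ * (2 + δ)) * (1 / 4 - E)
  have hB : √π * B ≤ 3 / 2 * δ ^ 2 * (2 + δ) :=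
    secant_bound_arith sqrt_pi_le hδ0.le hδ (exp_pos _).le hE
  have hSB : S * B ≤ 3 / 2 * s * (δ * (2 + δ)) := by
    rw [← mul_le_mul_iff_of_pos_right hq0, mul_right_comm, hSq]
    exact hB.trans_eq (by rw [← hqs]; ring)
  simp only [B] at hSB
  have hpos : 0 < δ * (2 + δ) := by positivity
  rw [← mul_le_mul_iff_of_pos_left hpos]
  nlinarith [mul_le_mul_of_nonneg_left hQ' (by positivity : (0 : ℝ) ≤ 2 * (1 + δ) ^ 2),
    mul_le_mul_of_nonneg_left hQ (by positivity : (0 : ℝ) ≤ 2 * (1 + δ) ^ 2 + δ * (2 + δ))]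

theorem two_mul_mul_oddThetaMoment_sub_oddTheta_le {s : ℝ} (hs : 0 < s) :
    2 * s * oddThetaMoment s - oddTheta s ≤ 2 * s * exp (-s) := by
  rcases le_or_gt s (1 / 4) with hs4 | hs4
  · have h := two_mul_mul_oddThetaMoment_sub_oddTheta_le_of_le_quarter hs hs4
    nlinarith [add_one_le_exp (-s)]
  · nlinarith [two_mul_mul_oddThetaMoment_le hs4.le, exp_neg_le_oddTheta hs]

theorem tsum_odd_sq_sub_mul_exp_le {v : ℝ} (hv : 0 < v) :
    ∑' j : ℕ, ((2 * (j : ℝ) + 1) ^ 2 * π ^ 2 - v) *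
        exp (-((2 * (j : ℝ) + 1) ^ 2 * π ^ 2) / (2 * v)) ≤
      π ^ 2 * exp (-(π ^ 2 / (2 * v))) := by
  set s := π ^ 2 / (2 * v)
  have hs : 0 < s := by positivity
  have hvs : v * (2 * s) = π ^ 2 := by simp only [s]; field_simp
  have hterm : ∀ j : ℕ, ((2 * (j : ℝ) + 1) ^ 2 * π ^ 2 - v) *
      exp (-((2 * (j : ℝ) + 1) ^ 2 * π ^ 2) / (2 * v)) =
      π ^ 2 * ((2 * (j : ℝ) + 1) ^ 2 * exp (-s * (2 * (j : ℝ) + 1) ^ 2)) -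
        v * exp (-s * (2 * (j : ℝ) + 1) ^ 2) := fun j ↦ by
    simp only [s]; ring_nf
  rw [tsum_congr hterm, ((summable_odd_sq_mul_exp_neg_mul_odd_sq hs).mul_left _).tsum_sub
    ((summable_exp_neg_mul_odd_sq hs).mul_left _), tsum_mul_left, tsum_mul_left,
    ← oddThetaMoment, ← oddTheta, ← hvs]
  calc v * (2 * s) * oddThetaMoment s - v * oddTheta s
      = v * (2 * s * oddThetaMoment s - oddTheta s) := by ring
    _ ≤ v * (2 * s * exp (-s)) := by gcongr; exact two_mul_mul_oddThetaMoment_sub_oddTheta_le hs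
    _ = v * (2 * s) * exp (-s) := by ring

theorem mul_invGammaDensity_pi_sq_div_two {α v : ℝ} (hα : 0 < α) (hv : 0 < v) :
    √(2 * π ^ 5) * Gamma α / (π ^ 2 / 2) ^ α * v ^ (α - 3 / 2) *
        invGammaDensity α (π ^ 2 / 2) v =
      v ^ (-(5 : ℝ) / 2) * √(2 * π) * (π ^ 2 * exp (-(π ^ 2 / (2 * v)))) := by
  have hΓ : Gamma α ≠ 0 := (Gamma_pos_of_pos hα).ne'
  have hγ : (π ^ 2 / 2) ^ α ≠ 0 := (rpow_pos_of_pos (by positivity) α).ne'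
  have hsqrt : √(2 * π ^ 5) = √(2 * π) * π ^ 2 := by
    rw [show 2 * π ^ 5 = 2 * π * (π ^ 2) ^ 2 by ring, sqrt_mul (by positivity),
      sqrt_sq (by positivity)]
  have hpow : v ^ (α - 3 / 2) * v ^ (-α - 1) = v ^ (-(5 : ℝ) / 2) := by
    rw [← rpow_add hv]; ring_nf
  rw [invGammaDensity, if_pos hv, hsqrt, ← hpow, show -(π ^ 2 / 2) / v = -(π ^ 2 / (2 * v)) by ring]
  field_simp

theorem stmt11_general (α vstar : ℝ) (hα : 0 < α) :
    ∀ v : ℝ, 0 < v → v ≤ vstar →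
      (v ^ (-(5 : ℝ) / 2) * Real.sqrt (2 * Real.pi) *
          ∑' j : ℕ, ((2 * (j : ℝ) + 1) ^ 2 * Real.pi ^ 2 - v) *
            Real.exp (-((2 * (j : ℝ) + 1) ^ 2 * Real.pi ^ 2) / (2 * v))) /
        invGammaDensity α (Real.pi ^ 2 / 2) v ≤
      Real.sqrt (2 * Real.pi ^ 5) * Real.Gamma α / (Real.pi ^ 2 / 2) ^ α *
        v ^ (α - 3 / 2) := by
  intro v hv _
  have hdensity : 0 < invGammaDensity α (π ^ 2 / 2) v := by
    rw [invGammaDensity, if_pos hv]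
    have := Gamma_pos_of_pos hα
    positivity
  rw [div_le_iff₀ hdensity, mul_invGammaDensity_pi_sq_div_two hα hv]
  gcongr
  exact tsum_odd_sq_sub_mul_exp_le hv

/-- on `0 < v ≤ v*`, the ratio of the small-`v` series of the
logistic Kolmogorov density to the `InverseGamma(α, π²/2)` density is bounded by
`δ1(v) = √(2π⁵) Γ(α) / (π²/2)^α · v^{α−3/2}`. -/
theorem stmt11 (α vstar : ℝ) (hα : 0 < α) (hvstar : 0 < vstar) :
    ∀ v : ℝ, 0 < v → v ≤ vstar →
      (v ^ (-(5 : ℝ) / 2) * Real.sqrt (2 * Real.pi) *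
          ∑' j : ℕ, ((2 * (j : ℝ) + 1) ^ 2 * Real.pi ^ 2 - v) *
            Real.exp (-((2 * (j : ℝ) + 1) ^ 2 * Real.pi ^ 2) / (2 * v))) /
        invGammaDensity α (Real.pi ^ 2 / 2) v ≤
      Real.sqrt (2 * Real.pi ^ 5) * Real.Gamma α / (Real.pi ^ 2 / 2) ^ α *
        v ^ (α - 3 / 2) :=
  stmt11_general α vstar hα
end

section
/- Suppose a prior on β ∈ R^p satisfies the stochastic representation β = X'(XX')^{-1} U2 where X is an n×p matrix with XX' invertible and U2 ~ G2 on R^n. Then the posterior of β in the LSBR model with likelihood ∏_i Λ((2y_i−1) x_i'β) has the representation β | Y=y = X'(XX')^{-1} U2 | (U1 ≤ B_y U2), where U1 has independent components with marginal CDF Λ, independent of U2, and B_y = 2diag(y) − I_n. -/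
/-!
Because `X (Xᵀ (X Xᵀ)⁻¹) = 1`, the likelihood at `β = Xᵀ (X Xᵀ)⁻¹ U2` is `∏ᵢ Λ((B_y U2)ᵢ)`.
By independence of `U1` and `U2`, and of the coordinates of `U1`, this is exactly the conditional
probability of `E = {U1 ≤ B_y U2}` given `U2`. Conditioning on `E` therefore reweights the prior
law of `β` by the likelihood (Bayes' rule), with normalising constant `μ(E)⁻¹`.
-/

open MeasureTheory ProbabilityTheory Matrix
open scoped ENNReal

section
variable {Ω α γ : Type*} [MeasurableSpace Ω] [MeasurableSpace α] [MeasurableSpace γ]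
  {μ : Measure Ω}

theorem monotone_of_toReal_measure_le [IsFiniteMeasure μ] {Z : Ω → ℝ} {F : ℝ → ℝ}
    (hF : ∀ x, (μ {ω | Z ω ≤ x}).toReal = F x) : Monotone F := by
  intro a b hab
  rw [← hF a, ← hF b]
  exact ENNReal.toReal_mono (measure_ne_top μ _) (measure_mono fun ω h => le_trans h hab)

theorem cond_map_eq_smul_withDensity {E : Set Ω} (hE : MeasurableSet E) {β : Ω → α}
    (hβ : Measurable β) {f : α → ℝ≥0∞} (hf : Measurable f)
    (h : ∀ S, MeasurableSet S → μ (E ∩ β ⁻¹' S) = ∫⁻ ω in β ⁻¹' S, f (β ω) ∂μ) :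
    (μ[|E]).map β = (μ E)⁻¹ • (μ.map β).withDensity f := by
  ext S hS
  rw [Measure.map_apply hβ hS, cond_apply hE, Measure.smul_apply, smul_eq_mul,
    withDensity_apply _ hS, setLIntegral_map hS hf hβ, h S hS]

theorem ProbabilityTheory.IndepFun.measure_preimage_inter_preimage [IsFiniteMeasure μ]
    {U : Ω → α} {V : Ω → γ} (hU : Measurable U) (hV : Measurable V) (h : IndepFun U V μ)
    {S : Set (α × γ)} (hS : MeasurableSet S) {A : Set γ} (hA : MeasurableSet A) :
    μ ((fun ω => (U ω, V ω)) ⁻¹' S ∩ V ⁻¹' A) =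
      ∫⁻ ω in V ⁻¹' A, μ.map U ((fun u => (u, V ω)) ⁻¹' S) ∂μ := by
  have hmap : μ.map (fun ω => (U ω, V ω)) = (μ.map U).prod (μ.map V) :=
    (indepFun_iff_map_prod_eq_prod_map_map hU.aemeasurable hV.aemeasurable).mp h
  have hSA : MeasurableSet (S ∩ Prod.snd ⁻¹' A) := hS.inter (measurable_snd hA)
  calc μ ((fun ω => (U ω, V ω)) ⁻¹' S ∩ V ⁻¹' A)
      = μ.map (fun ω => (U ω, V ω)) (S ∩ Prod.snd ⁻¹' A) := by
        rw [Measure.map_apply (hU.prodMk hV) hSA]; rfl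
    _ = ∫⁻ v, A.indicator (fun v => μ.map U ((fun u => (u, v)) ⁻¹' S)) v ∂μ.map V := by
        rw [hmap, Measure.prod_apply_symm hSA]
        refine lintegral_congr fun v => ?_
        by_cases hv : v ∈ A <;> simp [hv, Set.preimage, Set.indicator]
    _ = ∫⁻ ω in V ⁻¹' A, μ.map U ((fun u => (u, V ω)) ⁻¹' S) ∂μ := by
        rw [lintegral_indicator hA, setLIntegral_map hA (measurable_measure_prodMk_right hS) hV]

theorem ProbabilityTheory.iIndepFun.measure_preimage_Iic [IsFiniteMeasure μ] {ι : Type*}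
    [Fintype ι] {U : Ω → ι → ℝ} (h : iIndepFun (fun i ω => U ω i) μ) {F : ι → ℝ → ℝ}
    (hF : ∀ i x, (μ {ω | U ω i ≤ x}).toReal = F i x) (a : ι → ℝ) :
    μ (U ⁻¹' Set.Iic a) = ENNReal.ofReal (∏ i, F i (a i)) := by
  have hbox : U ⁻¹' Set.Iic a = ⋂ i, (fun ω => U ω i) ⁻¹' Set.Iic (a i) := by
    ext; simp [Pi.le_def]
  rw [hbox, h.meas_iInter fun i => ⟨Set.Iic (a i), measurableSet_Iic, rfl⟩,
    ← Finset.prod_congr rfl fun i _ => hF i (a i),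
    ENNReal.ofReal_prod_of_nonneg fun _ _ => ENNReal.toReal_nonneg]
  simp_rw [ENNReal.ofReal_toReal (measure_ne_top μ _)]
  rfl

end

theorem Matrix.mulVec_transpose_mul_inv_mulVec {m k R : Type*} [Fintype m] [DecidableEq m]
    [Fintype k] [CommRing R] (X : Matrix m k R) [Invertible (X * Xᵀ)] (v : m → R) :
    X *ᵥ ((Xᵀ * (X * Xᵀ)⁻¹) *ᵥ v) = v := by
  rw [mulVec_mulVec, ← Matrix.mul_assoc, mul_inv_of_invertible, one_mulVec]

theorem stmt15_general
    {Ωs : Type*} [MeasurableSpace Ωs] (μ : Measure Ωs) [IsProbabilityMeasure μ]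
    {n p : ℕ}
    (X : Matrix (Fin n) (Fin p) ℝ) [Invertible (X * Xᵀ)]
    (U1 U2 : Ωs → (Fin n → ℝ))
    (hU1 : Measurable U1) (hU2 : Measurable U2)
    (hindep : IndepFun U1 U2 μ)
    (hiid : iIndepFun (fun i ω => U1 ω i) μ)
    (Λ : ℝ → ℝ)
    (hΛ : ∀ (i : Fin n) (x : ℝ), (μ {ω | U1 ω i ≤ x}).toReal = Λ x)
    (y : Fin n → ℝ)
    (β : Ωs → (Fin p → ℝ))
    (hβ : β = fun ω => (Xᵀ * (X * Xᵀ)⁻¹).mulVec (U2 ω))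
    (E : Set Ωs) (hE : E = {ω | ∀ i, U1 ω i ≤ (2 * y i - 1) * U2 ω i}) :
    ∃ c : ℝ≥0∞, c ≠ 0 ∧
      (μ[|E]).map β = c • (μ.map β).withDensity
        (fun b => ENNReal.ofReal (∏ i, Λ ((2 * y i - 1) * X.mulVec b i))) := by
  set S := {q : (Fin n → ℝ) × (Fin n → ℝ) | ∀ i, q.1 i ≤ (2 * y i - 1) * q.2 i}
  have hS : MeasurableSet S := by
    simp only [S, Set.ofPred_forall]
    exact .iInter fun i => measurableSet_le (by fun_prop) (by fun_prop)
  have hEU : E = (fun ω => (U1 ω, U2 ω)) ⁻¹' S := hE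
  have hT : Measurable fun v => (Xᵀ * (X * Xᵀ)⁻¹) *ᵥ v := by fun_prop
  have hβU : ∀ A, β ⁻¹' A = U2 ⁻¹' ((fun v => (Xᵀ * (X * Xᵀ)⁻¹) *ᵥ v) ⁻¹' A) := by
    subst hβ; exact fun _ => rfl
  have hlik : Measurable fun b : Fin p → ℝ =>
      ENNReal.ofReal (∏ i, Λ ((2 * y i - 1) * X.mulVec b i)) :=
    (Finset.measurable_prod _ fun i _ =>
      (monotone_of_toReal_measure_le (hΛ i)).measurable.comp (by fun_prop)).ennreal_ofReal
  refine ⟨(μ E)⁻¹, ENNReal.inv_ne_zero.mpr (measure_ne_top μ E),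
    cond_map_eq_smul_withDensity (hEU ▸ (hU1.prodMk hU2) hS) (hβ ▸ hT.comp hU2) hlik
      fun A hA => ?_⟩
  rw [hEU, hβU, hindep.measure_preimage_inter_preimage hU1 hU2 hS (hT hA), ← hβU]
  refine setLIntegral_congr_fun (hβU A ▸ hU2 (hT hA)) fun ω _ => ?_
  have hslice : (fun u => (u, U2 ω)) ⁻¹' S = Set.Iic fun i => (2 * y i - 1) * U2 ω i := rfl
  rw [hslice, Measure.map_apply hU1 measurableSet_Iic, hiid.measure_preimage_Iic hΛ, hβ,
    mulVec_transpose_mul_inv_mulVec]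

/-- if the prior satisfies `β = X'(XX')⁻¹ U2` with `U2 ~ G2`, and
`U1` has independent components with marginal CDF `Λ`, independent of `U2`, then
the posterior of `β` in the LSBR model (likelihood `∏ Λ((2yᵢ−1) xᵢ'β)`) is the
law of `X'(XX')⁻¹ U2` conditioned on `{U1 ≤ B_y U2}`. -/
theorem stmt15
    {Ωs : Type*} [MeasurableSpace Ωs] (μ : Measure Ωs) [IsProbabilityMeasure μ]
    {n p : ℕ}
    (X : Matrix (Fin n) (Fin p) ℝ) [Invertible (X * Xᵀ)]
    (U1 U2 : Ωs → (Fin n → ℝ))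
    (hU1 : Measurable U1) (hU2 : Measurable U2)
    (hindep : IndepFun U1 U2 μ)
    (hiid : iIndepFun (fun i ω => U1 ω i) μ)
    (Λ : ℝ → ℝ)
    (hΛ : ∀ (i : Fin n) (x : ℝ), (μ {ω | U1 ω i ≤ x}).toReal = Λ x)
    (y : Fin n → ℝ) (hy : ∀ i, y i = 0 ∨ y i = 1)
    (β : Ωs → (Fin p → ℝ))
    (hβ : β = fun ω => (Xᵀ * (X * Xᵀ)⁻¹).mulVec (U2 ω))
    (E : Set Ωs) (hE : E = {ω | ∀ i, U1 ω i ≤ (2 * y i - 1) * U2 ω i})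
    (hpos : 0 < μ E) :
    ∃ c : ℝ≥0∞, c ≠ 0 ∧
      (μ[|E]).map β = c • (μ.map β).withDensity
        (fun b => ENNReal.ofReal (∏ i, Λ ((2 * y i - 1) * X.mulVec b i))) :=
  stmt15_general μ X U1 U2 hU1 hU2 hindep hiid Λ hΛ y β hβ E hE
end
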